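/- arXiv:0705.0468 — 2 statements merged into one kernel-verified Lean document; each statement's English description precedes it below -/
import Mathlib

section
/- If p1, p2, p3, p4 > 0, then η1 > 0, η2 > 0, and 1 - η1 - η2 = (p1 p4 - p2 p3)² / ((p1+p2)(p3+p4)(p1+p3)(p2+p4)). In particular η1 + η2 ≤ 1, with equality if and only if p1 p4 = p2 p3; hence for p1 p4 ≠ p2 p3 the trinomial weight b2(x, y, N; η1, η2) is a probability distribution on {(x, y) ∈ ℤ≥0² : x + y ≤ N} with all weights strictly positive. -/
open Finset

/-- The binomial distribution `b(k, n; α) = C(n,k) α^k (1-α)^(n-k)`. -/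
noncomputable def binomPMF (n k : ℕ) (α : ℝ) : ℝ :=
  (n.choose k : ℝ) * α ^ k * (1 - α) ^ (n - k)

/-- The trinomial distribution
`b₂(i₁, i₂, n; β₁, β₂) = (n!/(i₁! i₂! (n-i₁-i₂)!)) β₁^{i₁} β₂^{i₂} (1-β₁-β₂)^{n-i₁-i₂}`. -/
noncomputable def trinomPMF (n i1 i2 : ℕ) (β1 β2 : ℝ) : ℝ :=
  ((n.factorial : ℝ) /
      ((i1.factorial : ℝ) * (i2.factorial : ℝ) * ((n - i1 - i2).factorial : ℝ))) *
    β1 ^ i1 * β2 ^ i2 * (1 - β1 - β2) ^ (n - i1 - i2)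

/-- The Hoare–Rahman kernel `K(j₁, j₂; i₁, i₂)`. -/
noncomputable def HRkernel (N : ℕ) (α1 α2 β1 β2 : ℝ) (j1 j2 i1 i2 : ℕ) : ℝ :=
  ∑ k1 ∈ range (min i1 j1 + 1), ∑ k2 ∈ range (min i2 j2 + 1),
    binomPMF i1 k1 α1 * binomPMF i2 k2 α2 *
      trinomPMF (N - k1 - k2) (j1 - k1) (j2 - k2) β1 β2

/-! The identity `1 - η₁ - η₂ = (p₁p₄ - p₂p₃)² / ((p₁+p₂)(p₃+p₄)(p₁+p₃)(p₂+p₄))` is a rational-function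
identity; it gives positivity of `η₁, η₂`, the bound `η₁ + η₂ ≤ 1` and its equality case at once.
For `p₁p₄ ≠ p₂p₃` all three trinomial parameters are then positive, and the weights sum to
`(η₁ + η₂ + (1 - η₁ - η₂))^N = 1` by the trinomial theorem, i.e. the binomial theorem applied twice. -/

lemma factorial_div_factorial_mul_factorial_mul_factorial {n i j : ℕ} (h : i + j ≤ n) :
    (n.factorial : ℝ) / (i.factorial * j.factorial * (n - i - j).factorial) =
      n.choose i * (n - i).choose j := by
  have hnat : n.choose i * (n - i).choose j * (i.factorial * j.factorial * (n - i - j).factorial) =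
      n.factorial := by
    calc n.choose i * (n - i).choose j * (i.factorial * j.factorial * (n - i - j).factorial)
        = n.choose i * i.factorial * ((n - i).choose j * j.factorial * (n - i - j).factorial) := by
          ring
      _ = n.choose i * i.factorial * (n - i).factorial := by
          rw [Nat.choose_mul_factorial_mul_factorial (by omega : j ≤ n - i)]
      _ = n.factorial := Nat.choose_mul_factorial_mul_factorial (by omega)
  rw [div_eq_iff (by positivity)]
  exact_mod_cast hnat.symm

lemma trinomPMF_eq_choose_mul_choose {n i j : ℕ} (h : i + j ≤ n) (β1 β2 : ℝ) :
    trinomPMF n i j β1 β2 =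
      n.choose i * β1 ^ i * ((n - i).choose j * β2 ^ j * (1 - β1 - β2) ^ (n - i - j)) := by
  rw [trinomPMF, factorial_div_factorial_mul_factorial_mul_factorial h]
  ring

theorem trinomPMF_pos {β1 β2 : ℝ} (hβ1 : 0 < β1) (hβ2 : 0 < β2) (hβ : 0 < 1 - β1 - β2)
    (n i j : ℕ) : 0 < trinomPMF n i j β1 β2 := by
  unfold trinomPMF
  positivity

theorem sum_trinomPMF (n : ℕ) (β1 β2 : ℝ) :
    ∑ i ∈ range (n + 1), ∑ j ∈ range (n + 1 - i), trinomPMF n i j β1 β2 = 1 := by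
  have inner : ∀ i ∈ range (n + 1), ∑ j ∈ range (n + 1 - i), trinomPMF n i j β1 β2 =
      n.choose i * β1 ^ i * (1 - β1) ^ (n - i) := by
    intro i hi
    have hi : i ≤ n := Nat.lt_succ_iff.mp (mem_range.mp hi)
    rw [show n + 1 - i = n - i + 1 by omega, show 1 - β1 = β2 + (1 - β1 - β2) by ring, add_pow,
      mul_sum]
    refine sum_congr rfl fun j hj => ?_
    rw [trinomPMF_eq_choose_mul_choose (by have := mem_range.mp hj; omega), Nat.sub_sub]
    ring
  calc ∑ i ∈ range (n + 1), ∑ j ∈ range (n + 1 - i), trinomPMF n i j β1 β2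
      = ∑ i ∈ range (n + 1), β1 ^ i * (1 - β1) ^ (n - i) * n.choose i :=
        sum_congr rfl fun i hi => by rw [inner i hi]; ring
    _ = (β1 + (1 - β1)) ^ n := (add_pow _ _ _).symm
    _ = 1 := by simp

lemma one_sub_eta_sub_eta {p1 p2 p3 p4 : ℝ} (h12 : p1 + p2 ≠ 0) (h13 : p1 + p3 ≠ 0)
    (h24 : p2 + p4 ≠ 0) (h34 : p3 + p4 ≠ 0) :
    1 - p1 * p2 * (p1 + p2 + p3 + p4) / ((p1 + p2) * (p1 + p3) * (p2 + p4))
      - p3 * p4 * (p1 + p2 + p3 + p4) / ((p1 + p3) * (p2 + p4) * (p3 + p4)) =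
      (p1 * p4 - p2 * p3) ^ 2 / ((p1 + p2) * (p3 + p4) * (p1 + p3) * (p2 + p4)) := by
  field_simp
  ring

/-- positivity of `η₁, η₂`, the closed form of `1 - η₁ - η₂`, the
inequality `η₁ + η₂ ≤ 1` with equality iff `p₁p₄ = p₂p₃`, and that for
`p₁p₄ ≠ p₂p₃` the trinomial weight is a probability distribution with all
weights strictly positive. -/
theorem eta_properties (p1 p2 p3 p4 : ℝ)
    (h1 : 0 < p1) (h2 : 0 < p2) (h3 : 0 < p3) (h4 : 0 < p4)
    (η1 η2 : ℝ)
    (hη1 : η1 = p1 * p2 * (p1 + p2 + p3 + p4) / ((p1 + p2) * (p1 + p3) * (p2 + p4)))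
    (hη2 : η2 = p3 * p4 * (p1 + p2 + p3 + p4) / ((p1 + p3) * (p2 + p4) * (p3 + p4))) :
    0 < η1 ∧ 0 < η2 ∧
      1 - η1 - η2 =
        (p1 * p4 - p2 * p3) ^ 2 / ((p1 + p2) * (p3 + p4) * (p1 + p3) * (p2 + p4)) ∧
      η1 + η2 ≤ 1 ∧
      (η1 + η2 = 1 ↔ p1 * p4 = p2 * p3) ∧
      (p1 * p4 ≠ p2 * p3 → ∀ N : ℕ,
        (∀ x y : ℕ, x + y ≤ N → 0 < trinomPMF N x y η1 η2) ∧
        (∑ x ∈ range (N + 1), ∑ y ∈ range (N + 1 - x), trinomPMF N x y η1 η2) = 1) := by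
  have hD : 0 < (p1 + p2) * (p3 + p4) * (p1 + p3) * (p2 + p4) := by positivity
  have hη1_pos : 0 < η1 := hη1 ▸ by positivity
  have hη2_pos : 0 < η2 := hη2 ▸ by positivity
  have hgap : 1 - η1 - η2 =
      (p1 * p4 - p2 * p3) ^ 2 / ((p1 + p2) * (p3 + p4) * (p1 + p3) * (p2 + p4)) := by
    rw [hη1, hη2]
    exact one_sub_eta_sub_eta (by positivity) (by positivity) (by positivity) (by positivity)
  have hgap_nonneg : 0 ≤ 1 - η1 - η2 := hgap ▸ by positivity
  have hgap_eq_zero : η1 + η2 = 1 ↔ p1 * p4 = p2 * p3 :=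
    calc η1 + η2 = 1 ↔ 1 - η1 - η2 = 0 := by constructor <;> intro <;> linarith
      _ ↔ (p1 * p4 - p2 * p3) ^ 2 = 0 := by rw [hgap, div_eq_zero_iff, or_iff_left hD.ne']
      _ ↔ p1 * p4 = p2 * p3 := by rw [pow_eq_zero_iff two_ne_zero, sub_eq_zero]
  refine ⟨hη1_pos, hη2_pos, hgap, by linarith, hgap_eq_zero,
    fun hne N => ⟨?_, sum_trinomPMF N η1 η2⟩⟩
  have hgap_pos : 0 < 1 - η1 - η2 :=
    hgap_nonneg.lt_of_ne fun h => hne (hgap_eq_zero.mp (by linarith))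
  exact fun x y _ => trinomPMF_pos hη1_pos hη2_pos hgap_pos N x y
end

section
/- Let p1, p2, p3, p4 > 0 with p1 p4 ≠ p2 p3, let N ≥ 1 be an integer, and let t, u, v, w, η1, η2 be the associated parameters. Then the Rahman polynomials are orthogonal with respect to the trinomial distribution: for all nonnegative integers m, n, m', n' with m + n ≤ N, m' + n' ≤ N and (m, n) ≠ (m', n'), one has Σ_{x, y ≥ 0, x + y ≤ N} b2(x, y, N; η1, η2) P_{m,n}(x, y) P_{m',n'}(x, y) = 0. -/
open Finset

/-- The Pochhammer symbol `(a)_r = a (a+1) ⋯ (a+r-1)`. -/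
noncomputable def poch (a : ℝ) (r : ℕ) : ℝ := ∏ s ∈ range r, (a + s)

/-- The Rahman polynomial `P_{m,n}(x,y)`, summed over `i+j ≤ m`, `k+ℓ ≤ n`. -/
noncomputable def rahmanP (N : ℕ) (t u v w : ℝ) (m n x y : ℕ) : ℝ :=
  ∑ i ∈ range (m + 1), ∑ j ∈ range (m + 1 - i),
    ∑ k ∈ range (n + 1), ∑ l ∈ range (n + 1 - k),
      poch (-(m : ℝ)) (i + j) * poch (-(n : ℝ)) (k + l) *
          poch (-(x : ℝ)) (i + k) * poch (-(y : ℝ)) (j + l) /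
        ((i.factorial : ℝ) * (j.factorial : ℝ) * (k.factorial : ℝ) * (l.factorial : ℝ) *
          poch (-(N : ℝ)) (i + j + k + l)) *
        t ^ i * u ^ j * v ^ k * w ^ l

/-!
Put `G(σ, τ; x, y) = ∑_{m+n ≤ N} (N; m, n) P_{m,n}(x, y) σ^m τ^n`. Expand `P_{m,n}` and sum over
`(m, n)` first, using
`∑ (N; m, n) (-m)_a (-n)_b σ^m τ^n = (-N)_{a+b} σ^a τ^b (1+σ+τ)^(N-a-b)`.
This cancels the `(-N)_{i+j+k+l}` in the denominators. What remains is a product of two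
trinomial expansions:
`G = (1+σ+τ)^(N-x-y) (1+(1-t)σ+(1-v)τ)^x (1+(1-u)σ+(1-w)τ)^y`.
By the trinomial theorem, the `b₂`-average of `G(σ, τ) G(σ', τ')` is
`(η₁ A A' + η₂ B B' + (1-η₁-η₂) C C')^N`, where `A, B, C` are the three linear factors above.
Because `η₁ t + η₂ u = η₁ v + η₂ w = η₁ t v + η₂ u w = 1`, every mixed term cancels, leaving
`(1 + λ₁ σσ' + λ₂ ττ')^N`. Only the monomials `(σσ')^m (ττ')^n` occur in it, so comparing the
coefficients of `σ^m τ^n σ'^m' τ'^n'` shows that the inner product vanishes when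
`(m, n) ≠ (m', n')`.
-/

lemma poch_neg_natCast (m r : ℕ) : poch (-(m : ℝ)) r = (-1) ^ r * m.descFactorial r := by
  induction r with
  | zero => simp [poch]
  | succ r ih =>
    rw [poch, prod_range_succ, ← poch, ih, Nat.descFactorial_succ, pow_succ]
    rcases le_or_gt r m with h | h
    · push_cast [h]; ring
    · simp [Nat.descFactorial_eq_zero_iff_lt.2 h]

lemma poch_neg_natCast_eq_zero {m r : ℕ} (h : m < r) : poch (-(m : ℝ)) r = 0 := by
  simp [poch_neg_natCast, Nat.descFactorial_eq_zero_iff_lt.2 h]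

lemma poch_neg_natCast_ne_zero {m r : ℕ} (h : r ≤ m) : poch (-(m : ℝ)) r ≠ 0 := by
  simp [poch_neg_natCast, Nat.descFactorial_eq_zero_iff_lt, h]

noncomputable def trinomialCoeff (M i j : ℕ) : ℝ :=
  (M.factorial : ℝ) / ((i.factorial : ℝ) * (j.factorial : ℝ) * ((M - i - j).factorial : ℝ))

lemma trinomialCoeff_pos (M i j : ℕ) : 0 < trinomialCoeff M i j := by
  unfold trinomialCoeff
  positivity

lemma trinomialCoeff_eq_choose_mul_choose {M i j : ℕ} (h : i + j ≤ M) :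
    trinomialCoeff M i j = M.choose i * (M - i).choose j := by
  rw [trinomialCoeff, Nat.cast_choose ℝ (by omega : i ≤ M),
    Nat.cast_choose ℝ (by omega : j ≤ M - i)]
  have := (M - i).factorial_pos
  field_simp

lemma poch_neg_natCast_div_factorial {x i k : ℕ} (h : i + k ≤ x) :
    poch (-(x : ℝ)) (i + k) / (i.factorial * k.factorial)
      = (-1) ^ (i + k) * trinomialCoeff x i k := by
  rw [poch_neg_natCast, trinomialCoeff, ← Nat.factorial_mul_descFactorial h, Nat.sub_sub]
  have := (x - (i + k)).factorial_pos
  have := i.factorial_pos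
  have := k.factorial_pos
  push_cast
  field_simp

lemma add_add_pow_eq_sum_trinomialCoeff (M : ℕ) (a b c : ℝ) :
    (a + b + c) ^ M = ∑ i ∈ range (M + 1), ∑ j ∈ range (M + 1 - i),
      trinomialCoeff M i j * a ^ i * b ^ j * c ^ (M - i - j) := by
  rw [add_assoc, add_pow]
  refine sum_congr rfl fun i hi => ?_
  rw [add_pow, mul_sum, sum_mul, show M + 1 - i = M - i + 1 by simp only [mem_range] at hi; omega]
  refine sum_congr rfl fun j hj => ?_
  rw [trinomialCoeff_eq_choose_mul_choose (by simp only [mem_range] at hi hj; omega), Nat.sub_sub]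
  ring

lemma sum_trinomPMF_mul_pow (N : ℕ) (β1 β2 a b c : ℝ) :
    ∑ x ∈ range (N + 1), ∑ y ∈ range (N + 1 - x),
      trinomPMF N x y β1 β2 * (a ^ x * b ^ y * c ^ (N - x - y))
      = (β1 * a + β2 * b + (1 - β1 - β2) * c) ^ N := by
  rw [add_add_pow_eq_sum_trinomialCoeff]
  refine sum_congr rfl fun x _ => sum_congr rfl fun y _ => ?_
  rw [trinomPMF, trinomialCoeff, mul_pow, mul_pow, mul_pow]
  ring

section TriangleSums

variable {M : Type*} [AddCommMonoid M]

lemma sum_range_eq_sum_range_sub_add {K a : ℕ} {g : ℕ → M} (hg : ∀ i < a, g i = 0) :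
    ∑ i ∈ range K, g i = ∑ i ∈ range (K - a), g (a + i) := by
  rcases le_or_gt a K with h | h
  · obtain ⟨c, rfl⟩ := Nat.exists_eq_add_of_le h
    rw [sum_range_add, sum_eq_zero fun i hi => hg i (mem_range.1 hi), zero_add,
      Nat.add_sub_cancel_left]
  · rw [Nat.sub_eq_zero_of_le h.le, sum_range_zero]
    exact sum_eq_zero fun i hi => hg i (by simp only [mem_range] at hi; omega)

lemma sum_triangle_eq_sum_square {N K : ℕ} (hNK : N ≤ K) {f : ℕ → ℕ → M}
    (hf : ∀ i j, N < i + j → f i j = 0) :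
    ∑ i ∈ range (N + 1), ∑ j ∈ range (N + 1 - i), f i j
      = ∑ i ∈ range (K + 1), ∑ j ∈ range (K + 1), f i j :=
  calc _ = ∑ i ∈ range (N + 1), ∑ j ∈ range (K + 1), f i j :=
        sum_congr rfl fun i _ => sum_subset (range_subset_range.2 (by omega))
          fun j _ hj => hf i j (by simp only [mem_range] at hj; omega)
    _ = _ := sum_subset (range_subset_range.2 (by omega))
          fun i _ hi => sum_eq_zero fun j _ => hf i j (by simp only [mem_range] at hi; omega)

lemma sum_triangle_shift {N a b : ℕ} (hab : a + b ≤ N) {f : ℕ → ℕ → M}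
    (hf : ∀ m n, m < a ∨ n < b → f m n = 0) :
    ∑ m ∈ range (N + 1), ∑ n ∈ range (N + 1 - m), f m n
      = ∑ i ∈ range (N - a - b + 1), ∑ j ∈ range (N - a - b + 1 - i), f (a + i) (b + j) := by
  rw [sum_range_eq_sum_range_sub_add fun m hm => sum_eq_zero fun n _ => hf m n (.inl hm)]
  rw [sum_congr rfl fun i _ => sum_range_eq_sum_range_sub_add fun n hn => hf _ n (.inr hn),
    show N + 1 - a = N - a - b + 1 + b by omega, sum_range_add]
  rw [sum_eq_zero (s := range b) fun i _ => by rw [show N + 1 - (a + _) - b = 0 by omega]; rfl,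
    add_zero]
  exact sum_congr rfl fun i hi => by rw [show N + 1 - (a + i) - b = N - a - b + 1 - i by omega]

def triangle (N : ℕ) : Finset (ℕ × ℕ) :=
  (range (N + 1) ×ˢ range (N + 1)).filter fun p => p.1 + p.2 ≤ N

@[simp]
lemma mem_triangle {N : ℕ} {p : ℕ × ℕ} : p ∈ triangle N ↔ p.1 + p.2 ≤ N := by
  simp only [triangle, mem_filter, mem_product, mem_range, and_iff_right_iff_imp]
  omega

lemma sum_triangle (N : ℕ) (f : ℕ → ℕ → M) :
    ∑ p ∈ triangle N, f p.1 p.2 = ∑ i ∈ range (N + 1), ∑ j ∈ range (N + 1 - i), f i j :=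
  sum_finset_product _ _ _ fun p => by
    simp only [mem_triangle, mem_range]; omega

lemma sum_comm_sum_box {ι κ : Type*} (s : Finset ι) (r : Finset κ) (F : ι → κ → κ → κ → κ → M) :
    ∑ p ∈ s, ∑ i ∈ r, ∑ j ∈ r, ∑ k ∈ r, ∑ l ∈ r, F p i j k l
      = ∑ i ∈ r, ∑ j ∈ r, ∑ k ∈ r, ∑ l ∈ r, ∑ p ∈ s, F p i j k l := by
  rw [sum_comm]; refine sum_congr rfl fun i _ => ?_
  rw [sum_comm]; refine sum_congr rfl fun j _ => ?_
  rw [sum_comm]; refine sum_congr rfl fun k _ => ?_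
  rw [sum_comm]

end TriangleSums

lemma trinomialCoeff_mul_poch {N a b i j : ℕ} (h : a + b + i + j ≤ N) :
    trinomialCoeff N (a + i) (b + j) * poch (-((a + i : ℕ) : ℝ)) a * poch (-((b + j : ℕ) : ℝ)) b
      = poch (-(N : ℝ)) (a + b) * trinomialCoeff (N - a - b) i j := by
  have hdesc : ∀ {n k : ℕ}, k ≤ n → (n.descFactorial k : ℝ) = n.factorial / (n - k).factorial :=
    fun {n k} hk => by
      rw [eq_div_iff (by positivity), mul_comm]
      exact_mod_cast Nat.factorial_mul_descFactorial hk
  simp only [poch_neg_natCast, trinomialCoeff]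
  rw [hdesc (by omega : a ≤ a + i), hdesc (by omega : b ≤ b + j), hdesc (by omega : a + b ≤ N),
    Nat.add_sub_cancel_left, Nat.add_sub_cancel_left,
    show N - (a + i) - (b + j) = N - a - b - i - j by omega,
    show N - (a + b) = N - a - b by omega]
  have := (a + i).factorial_pos
  have := (b + j).factorial_pos
  have := (N - a - b).factorial_pos
  field_simp
  ring

lemma sum_trinomialCoeff_mul_poch (N a b : ℕ) (σ τ : ℝ) :
    ∑ m ∈ range (N + 1), ∑ n ∈ range (N + 1 - m),
      trinomialCoeff N m n * poch (-(m : ℝ)) a * poch (-(n : ℝ)) b * σ ^ m * τ ^ n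
      = poch (-(N : ℝ)) (a + b) * σ ^ a * τ ^ b * (1 + σ + τ) ^ (N - a - b) := by
  rcases le_or_gt (a + b) N with hab | hab
  · rw [sum_triangle_shift hab fun m n h => by
        rcases h with h | h <;> simp [poch_neg_natCast_eq_zero h],
      show 1 + σ + τ = σ + τ + 1 by ring, add_add_pow_eq_sum_trinomialCoeff, mul_sum]
    refine sum_congr rfl fun i hi => ?_
    rw [mul_sum]
    refine sum_congr rfl fun j hj => ?_
    have h := trinomialCoeff_mul_poch (a := a) (b := b) (show a + b + i + j ≤ N by
      simp only [mem_range] at hi hj; omega)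
    rw [one_pow, pow_add, pow_add]
    linear_combination σ ^ a * σ ^ i * τ ^ b * τ ^ j * h
  · rw [poch_neg_natCast_eq_zero hab]
    refine (sum_eq_zero fun m hm => sum_eq_zero fun n hn => ?_).trans (by ring)
    rcases lt_or_ge m a with h | h
    · simp [poch_neg_natCast_eq_zero h]
    · simp [poch_neg_natCast_eq_zero (show n < b by simp only [mem_range] at hm hn; omega)]

noncomputable def rahmanCoeff (N : ℕ) (t u v w : ℝ) (x y i j k l : ℕ) : ℝ :=
  poch (-(x : ℝ)) (i + k) * poch (-(y : ℝ)) (j + l) /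
      ((i.factorial : ℝ) * j.factorial * k.factorial * l.factorial *
        poch (-(N : ℝ)) (i + j + k + l)) *
    t ^ i * u ^ j * v ^ k * w ^ l

lemma rahmanP_eq_sum_box {N m n : ℕ} (hm : m ≤ N) (hn : n ≤ N) (t u v w : ℝ) (x y : ℕ) :
    rahmanP N t u v w m n x y
      = ∑ i ∈ range (N + 1), ∑ j ∈ range (N + 1), ∑ k ∈ range (N + 1), ∑ l ∈ range (N + 1),
          poch (-(m : ℝ)) (i + j) * poch (-(n : ℝ)) (k + l) *
            rahmanCoeff N t u v w x y i j k l := by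
  have hfactor : rahmanP N t u v w m n x y
      = ∑ i ∈ range (m + 1), ∑ j ∈ range (m + 1 - i), ∑ k ∈ range (n + 1), ∑ l ∈ range (n + 1 - k),
          poch (-(m : ℝ)) (i + j) * poch (-(n : ℝ)) (k + l) *
            rahmanCoeff N t u v w x y i j k l := by
    unfold rahmanP rahmanCoeff
    exact sum_congr rfl fun i _ => sum_congr rfl fun j _ => sum_congr rfl fun k _ =>
      sum_congr rfl fun l _ => by ring
  rw [hfactor, sum_triangle_eq_sum_square hm fun i j hij => by
    simp [poch_neg_natCast_eq_zero hij]]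
  exact sum_congr rfl fun i _ => sum_congr rfl fun j _ =>
    sum_triangle_eq_sum_square hn fun k l hkl => by simp [poch_neg_natCast_eq_zero hkl]

lemma rahmanCoeff_mul_poch {N x y : ℕ} (hxy : x + y ≤ N) (t u v w : ℝ) (i j k l : ℕ) :
    rahmanCoeff N t u v w x y i j k l * poch (-(N : ℝ)) (i + j + (k + l))
      = poch (-(x : ℝ)) (i + k) / (i.factorial * k.factorial) *
          (poch (-(y : ℝ)) (j + l) / (j.factorial * l.factorial)) *
            t ^ i * u ^ j * v ^ k * w ^ l := by
  rw [rahmanCoeff, ← add_assoc]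
  -- Past `N` the division by `(-N)_{i+j+k+l} = 0` returns the junk value `0`; the right side
  -- vanishes there as well, because then `i + k > x` or `j + l > y`.
  by_cases h : i + j + k + l ≤ N
  · have := poch_neg_natCast_ne_zero h
    field_simp
  · rcases (show x < i + k ∨ y < j + l by omega) with h | h <;>
      simp [poch_neg_natCast_eq_zero h]

lemma pow_mul_pow_mul_pow_eq_sum_box {N x y : ℕ} (hxy : x + y ≤ N) (t u v w σ τ : ℝ) :
    (1 + σ + τ) ^ (N - x - y) * (1 + (1 - t) * σ + (1 - v) * τ) ^ x *
        (1 + (1 - u) * σ + (1 - w) * τ) ^ y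
      = ∑ i ∈ range (N + 1), ∑ j ∈ range (N + 1), ∑ k ∈ range (N + 1), ∑ l ∈ range (N + 1),
          poch (-(x : ℝ)) (i + k) / (i.factorial * k.factorial) *
            (poch (-(y : ℝ)) (j + l) / (j.factorial * l.factorial)) *
            t ^ i * u ^ j * v ^ k * w ^ l *
            (σ ^ (i + j) * τ ^ (k + l) * (1 + σ + τ) ^ (N - (i + j) - (k + l))) := by
  set X := 1 + σ + τ
  have hx : ∀ i k, x < i + k → poch (-(x : ℝ)) (i + k) = 0 := fun _ _ => poch_neg_natCast_eq_zero
  have hy : ∀ j l, y < j + l → poch (-(y : ℝ)) (j + l) = 0 := fun _ _ => poch_neg_natCast_eq_zero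
  symm
  rw [sum_congr rfl fun i _ => sum_comm,
    ← sum_triangle_eq_sum_square (N := x) (by omega) fun i k hik => by simp [hx i k hik],
    show 1 + (1 - t) * σ + (1 - v) * τ = -t * σ + -v * τ + X by ring,
    show 1 + (1 - u) * σ + (1 - w) * τ = -u * σ + -w * τ + X by ring,
    add_add_pow_eq_sum_trinomialCoeff x, add_add_pow_eq_sum_trinomialCoeff y]
  rw [mul_comm (X ^ _), mul_assoc, sum_mul]
  refine sum_congr rfl fun i hi => ?_
  rw [sum_mul]
  refine sum_congr rfl fun k hk => ?_
  rw [← sum_triangle_eq_sum_square (N := y) (by omega) fun j l hjl => by simp [hy j l hjl]]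
  simp only [mul_sum]
  refine sum_congr rfl fun j hj => sum_congr rfl fun l hl => ?_
  simp only [mem_range] at hi hk hj hl
  rw [poch_neg_natCast_div_factorial (by omega), poch_neg_natCast_div_factorial (by omega),
    show N - (i + j) - (k + l) = N - x - y + (x - i - k) + (y - j - l) by omega,
    pow_add, pow_add]
  ring

theorem sum_trinomialCoeff_mul_rahmanP {N x y : ℕ} (hxy : x + y ≤ N) (t u v w σ τ : ℝ) :
    ∑ p ∈ triangle N, trinomialCoeff N p.1 p.2 * rahmanP N t u v w p.1 p.2 x y * σ ^ p.1 * τ ^ p.2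
      = (1 + σ + τ) ^ (N - x - y) * (1 + (1 - t) * σ + (1 - v) * τ) ^ x *
          (1 + (1 - u) * σ + (1 - w) * τ) ^ y := by
  have hexpand : ∀ p ∈ triangle N,
      trinomialCoeff N p.1 p.2 * rahmanP N t u v w p.1 p.2 x y * σ ^ p.1 * τ ^ p.2
        = ∑ i ∈ range (N + 1), ∑ j ∈ range (N + 1), ∑ k ∈ range (N + 1), ∑ l ∈ range (N + 1),
            rahmanCoeff N t u v w x y i j k l * (trinomialCoeff N p.1 p.2 *
              poch (-(p.1 : ℝ)) (i + j) * poch (-(p.2 : ℝ)) (k + l) * σ ^ p.1 * τ ^ p.2) := by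
    intro p hp
    rw [mem_triangle] at hp
    rw [rahmanP_eq_sum_box (by omega) (by omega)]
    simp only [mul_sum, sum_mul]
    exact sum_congr rfl fun i _ => sum_congr rfl fun j _ => sum_congr rfl fun k _ =>
      sum_congr rfl fun l _ => by ring
  rw [pow_mul_pow_mul_pow_eq_sum_box hxy, sum_congr rfl hexpand, sum_comm_sum_box]
  refine sum_congr rfl fun i _ => sum_congr rfl fun j _ => sum_congr rfl fun k _ =>
    sum_congr rfl fun l _ => ?_
  rw [← mul_sum, sum_triangle (f := fun m n => trinomialCoeff N m n * poch (-(m : ℝ)) (i + j) *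
    poch (-(n : ℝ)) (k + l) * σ ^ m * τ ^ n), sum_trinomialCoeff_mul_poch]
  linear_combination (σ ^ (i + j) * τ ^ (k + l) * (1 + σ + τ) ^ (N - (i + j) - (k + l))) *
    rahmanCoeff_mul_poch hxy t u v w i j k l

lemma eq_of_forall_sum_eval_monomial_eq {R σ ι : Type*} [CommRing R] [IsDomain R] [Infinite R]
    {s : Finset ι} {e : ι → σ →₀ ℕ} (he : Set.InjOn e s) {c d : ι → R}
    (h : ∀ z : σ → R, ∑ i ∈ s, c i * (e i).prod (fun j k => z j ^ k)
      = ∑ i ∈ s, d i * (e i).prod (fun j k => z j ^ k)) {i : ι} (hi : i ∈ s) : c i = d i := by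
  classical
  have hcoeff : ∀ f : ι → R, (∑ j ∈ s, MvPolynomial.monomial (e j) (f j)).coeff (e i) = f i := by
    intro f
    rw [MvPolynomial.coeff_sum, sum_eq_single_of_mem i hi fun j hj hji => by
      rw [MvPolynomial.coeff_monomial, if_neg fun h => hji (he hj hi h)],
      MvPolynomial.coeff_monomial, if_pos rfl]
  have hpoly : ∑ j ∈ s, MvPolynomial.monomial (e j) (c j)
      = ∑ j ∈ s, MvPolynomial.monomial (e j) (d j) :=
    MvPolynomial.funext fun z => by simpa only [map_sum, MvPolynomial.eval_monomial] using h z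
  rw [← hcoeff c, hpoly, hcoeff d]

lemma eq_of_forall_sum_mul_pow_eq {s : Finset ((ℕ × ℕ) × (ℕ × ℕ))} {c d : (ℕ × ℕ) × (ℕ × ℕ) → ℝ}
    (h : ∀ z1 z2 z3 z4 : ℝ,
      ∑ e ∈ s, c e * (z1 ^ e.1.1 * z2 ^ e.1.2 * z3 ^ e.2.1 * z4 ^ e.2.2)
        = ∑ e ∈ s, d e * (z1 ^ e.1.1 * z2 ^ e.1.2 * z3 ^ e.2.1 * z4 ^ e.2.2))
    {e : (ℕ × ℕ) × (ℕ × ℕ)} (he : e ∈ s) : c e = d e := by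
  refine eq_of_forall_sum_eval_monomial_eq
    (e := fun e => Finsupp.equivFunOnFinite.symm ![e.1.1, e.1.2, e.2.1, e.2.2])
    (fun a _ b _ hab => ?_) (fun z => ?_) he
  · have := Finsupp.equivFunOnFinite.symm.injective hab
    exact Prod.ext (Prod.ext (congrFun this 0) (congrFun this 1))
      (Prod.ext (congrFun this 2) (congrFun this 3))
  · simpa [Finsupp.prod_fintype, Fin.prod_univ_four] using h (z 0) (z 1) (z 2) (z 3)

noncomputable def rahmanInner (N : ℕ) (t u v w η1 η2 : ℝ) (p q : ℕ × ℕ) : ℝ :=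
  ∑ s ∈ triangle N,
    trinomPMF N s.1 s.2 η1 η2 * rahmanP N t u v w p.1 p.2 s.1 s.2 *
      rahmanP N t u v w q.1 q.2 s.1 s.2

theorem sum_trinomialCoeff_mul_rahmanInner {N : ℕ} {t u v w η1 η2 : ℝ}
    (h1 : η1 * t + η2 * u = 1) (h2 : η1 * v + η2 * w = 1) (h3 : η1 * t * v + η2 * u * w = 1)
    (z1 z2 z3 z4 : ℝ) :
    ∑ p ∈ triangle N, ∑ q ∈ triangle N,
      trinomialCoeff N p.1 p.2 * trinomialCoeff N q.1 q.2 * rahmanInner N t u v w η1 η2 p q *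
        (z1 ^ p.1 * z2 ^ p.2 * z3 ^ q.1 * z4 ^ q.2)
      = (1 + (η1 * t ^ 2 + η2 * u ^ 2 - 1) * (z1 * z3) +
          (η1 * v ^ 2 + η2 * w ^ 2 - 1) * (z2 * z4)) ^ N := by
  set G : ℝ → ℝ → ℕ → ℕ → ℝ := fun σ τ x y =>
    ∑ p ∈ triangle N, trinomialCoeff N p.1 p.2 * rahmanP N t u v w p.1 p.2 x y * σ ^ p.1 * τ ^ p.2
  have hkey :
      1 + (η1 * t ^ 2 + η2 * u ^ 2 - 1) * (z1 * z3) + (η1 * v ^ 2 + η2 * w ^ 2 - 1) * (z2 * z4)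
      = η1 * ((1 + (1 - t) * z1 + (1 - v) * z2) * (1 + (1 - t) * z3 + (1 - v) * z4)) +
        η2 * ((1 + (1 - u) * z1 + (1 - w) * z2) * (1 + (1 - u) * z3 + (1 - w) * z4)) +
        (1 - η1 - η2) * ((1 + z1 + z2) * (1 + z3 + z4)) := by
    linear_combination (z1 + z3 + 2 * z1 * z3 + z1 * z4 + z2 * z3) * h1 +
      (z2 + z4 + 2 * z2 * z4 + z1 * z4 + z2 * z3) * h2 - (z1 * z4 + z2 * z3) * h3
  have hprod : ∀ s ∈ triangle N,
      ((1 + (1 - t) * z1 + (1 - v) * z2) * (1 + (1 - t) * z3 + (1 - v) * z4)) ^ s.1 *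
        ((1 + (1 - u) * z1 + (1 - w) * z2) * (1 + (1 - u) * z3 + (1 - w) * z4)) ^ s.2 *
        ((1 + z1 + z2) * (1 + z3 + z4)) ^ (N - s.1 - s.2) = G z1 z2 s.1 s.2 * G z3 z4 s.1 s.2 := by
    intro s hs
    rw [mem_triangle] at hs
    simp only [G]
    rw [sum_trinomialCoeff_mul_rahmanP hs, sum_trinomialCoeff_mul_rahmanP hs, mul_pow, mul_pow,
      mul_pow]
    ring
  symm
  rw [hkey, ← sum_trinomPMF_mul_pow, ← sum_triangle N (fun x y => trinomPMF N x y η1 η2 * _),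
    sum_congr rfl fun s hs => by rw [hprod s hs]]
  simp only [rahmanInner, G, mul_sum, sum_mul]
  refine (sum_congr rfl fun s _ => sum_comm).trans
    (Eq.trans ?_ ((sum_congr rfl fun p _ => sum_comm).trans sum_comm).symm)
  exact sum_congr rfl fun s _ => sum_congr rfl fun p _ => sum_congr rfl fun q _ => by ring

lemma pow_eq_sum_triangle_product_diag (N : ℕ) (a b z1 z2 z3 z4 : ℝ) :
    (1 + a * (z1 * z3) + b * (z2 * z4)) ^ N
      = ∑ e ∈ triangle N ×ˢ triangle N,
          (if e.1 = e.2 then trinomialCoeff N e.1.1 e.1.2 * a ^ e.1.1 * b ^ e.1.2 else 0) *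
            (z1 ^ e.1.1 * z2 ^ e.1.2 * z3 ^ e.2.1 * z4 ^ e.2.2) := by
  simp only [sum_product, ite_mul, zero_mul, sum_ite_eq]
  rw [sum_congr rfl fun e he => if_pos he,
    show 1 + a * (z1 * z3) + b * (z2 * z4) = a * (z1 * z3) + b * (z2 * z4) + 1 by ring,
    add_add_pow_eq_sum_trinomialCoeff, ← sum_triangle]
  exact sum_congr rfl fun e _ => by rw [one_pow, mul_pow, mul_pow]; ring

theorem rahmanInner_eq_zero {N : ℕ} {t u v w η1 η2 : ℝ}
    (h1 : η1 * t + η2 * u = 1) (h2 : η1 * v + η2 * w = 1) (h3 : η1 * t * v + η2 * u * w = 1)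
    {p q : ℕ × ℕ} (hp : p ∈ triangle N) (hq : q ∈ triangle N) (hpq : p ≠ q) :
    rahmanInner N t u v w η1 η2 p q = 0 := by
  have hcoeff := eq_of_forall_sum_mul_pow_eq (s := triangle N ×ˢ triangle N)
    (c := fun e => trinomialCoeff N e.1.1 e.1.2 * trinomialCoeff N e.2.1 e.2.2 *
      rahmanInner N t u v w η1 η2 e.1 e.2)
    (fun z1 z2 z3 z4 => ((sum_product _ _ _).trans
      (sum_trinomialCoeff_mul_rahmanInner h1 h2 h3 z1 z2 z3 z4)).trans
        (pow_eq_sum_triangle_product_diag N _ _ z1 z2 z3 z4))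
    (e := (p, q)) (mem_product.2 ⟨hp, hq⟩)
  simp only [if_neg hpq] at hcoeff
  exact (mul_eq_zero.1 hcoeff).resolve_left
    (mul_pos (trinomialCoeff_pos _ _ _) (trinomialCoeff_pos _ _ _)).ne'

theorem rahman_orthogonality_general (p1 p2 p3 p4 : ℝ)
    (h1 : 0 < p1) (h2 : 0 < p2) (h3 : 0 < p3) (h4 : 0 < p4)
    (N : ℕ)
    (t u v w η1 η2 : ℝ)
    (ht : t = (p1 + p2) * (p1 + p3) / (p1 * (p1 + p2 + p3 + p4)))
    (hu : u = (p1 + p3) * (p3 + p4) / (p3 * (p1 + p2 + p3 + p4)))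
    (hv : v = (p1 + p2) * (p2 + p4) / (p2 * (p1 + p2 + p3 + p4)))
    (hw : w = (p2 + p4) * (p3 + p4) / (p4 * (p1 + p2 + p3 + p4)))
    (hη1 : η1 = p1 * p2 * (p1 + p2 + p3 + p4) / ((p1 + p2) * (p1 + p3) * (p2 + p4)))
    (hη2 : η2 = p3 * p4 * (p1 + p2 + p3 + p4) / ((p1 + p3) * (p2 + p4) * (p3 + p4)))
    (m n m' n' : ℕ) (hmn : m + n ≤ N) (hmn' : m' + n' ≤ N)
    (hne : (m, n) ≠ (m', n')) :
    ∑ x ∈ range (N + 1), ∑ y ∈ range (N + 1 - x),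
      trinomPMF N x y η1 η2 * rahmanP N t u v w m n x y * rahmanP N t u v w m' n' x y
      = 0 := by
  have hE1 : η1 * t + η2 * u = 1 := by subst_vars; field_simp
  have hE2 : η1 * v + η2 * w = 1 := by subst_vars; field_simp
  have hE3 : η1 * t * v + η2 * u * w = 1 := by subst_vars; field_simp; ring
  have h := rahmanInner_eq_zero hE1 hE2 hE3 (p := (m, n)) (q := (m', n'))
    (mem_triangle.2 hmn) (mem_triangle.2 hmn') hne
  rwa [rahmanInner, sum_triangle N fun x y =>
    trinomPMF N x y η1 η2 * rahmanP N t u v w m n x y * rahmanP N t u v w m' n' x y] at h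

/-- the Rahman polynomials are orthogonal with respect to the
trinomial distribution `b₂(x, y, N; η₁, η₂)`. -/
theorem rahman_orthogonality (p1 p2 p3 p4 : ℝ)
    (h1 : 0 < p1) (h2 : 0 < p2) (h3 : 0 < p3) (h4 : 0 < p4)
    (hD : p1 * p4 ≠ p2 * p3)
    (N : ℕ) (hN : 1 ≤ N)
    (t u v w η1 η2 : ℝ)
    (ht : t = (p1 + p2) * (p1 + p3) / (p1 * (p1 + p2 + p3 + p4)))
    (hu : u = (p1 + p3) * (p3 + p4) / (p3 * (p1 + p2 + p3 + p4)))
    (hv : v = (p1 + p2) * (p2 + p4) / (p2 * (p1 + p2 + p3 + p4)))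
    (hw : w = (p2 + p4) * (p3 + p4) / (p4 * (p1 + p2 + p3 + p4)))
    (hη1 : η1 = p1 * p2 * (p1 + p2 + p3 + p4) / ((p1 + p2) * (p1 + p3) * (p2 + p4)))
    (hη2 : η2 = p3 * p4 * (p1 + p2 + p3 + p4) / ((p1 + p3) * (p2 + p4) * (p3 + p4)))
    (m n m' n' : ℕ) (hmn : m + n ≤ N) (hmn' : m' + n' ≤ N)
    (hne : (m, n) ≠ (m', n')) :
    ∑ x ∈ range (N + 1), ∑ y ∈ range (N + 1 - x),
      trinomPMF N x y η1 η2 * rahmanP N t u v w m n x y * rahmanP N t u v w m' n' x y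
      = 0 :=
  rahman_orthogonality_general p1 p2 p3 p4 h1 h2 h3 h4 N t u v w η1 η2 ht hu hv hw hη1 hη2 m n m' n'
    hmn hmn' hne
end
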